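/- arXiv:1312.4628 — 3 statements merged into one kernel-verified Lean document; each statement's English description precedes it below -/
import Mathlib

section
/- The function f(x) = 1 + 3x + 3x(x-1) + x(x-1)(x-2)/2 = (x^3 + 3x^2 + 2x + 2)/2 is log-concave on the interval [1, ∞), i.e., log(f(x)) is a concave function of x for x ≥ 1. -/
/-- `f(x) = (x³ + 3x² + 2x + 2)/2`. -/
noncomputable def f (x : ℝ) : ℝ := (x ^ 3 + 3 * x ^ 2 + 2 * x + 2) / 2

/-! A positive `C²` function `g` is log-concave wherever `g g'' ≤ g'²`, since
`(log g)'' = (g g'' - g'²) / g²`. For `f` this reduces to the quartic inequality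
`3x⁴ + 12x³ + 18x² ≥ 8`, obvious for `x ≥ 1`. The multiplicative form of log-concavity is
then the concavity inequality for `log ∘ f` pushed through `exp`. -/

theorem rpow_mul_rpow_le_of_concaveOn_log {E : Type*} [AddCommGroup E] [Module ℝ E]
    {s : Set E} {g : E → ℝ} (hg : ConcaveOn ℝ s fun x => Real.log (g x))
    (hpos : ∀ x ∈ s, 0 < g x) {x y : E} (hx : x ∈ s) (hy : y ∈ s) {t : ℝ} (ht₀ : 0 ≤ t)
    (ht₁ : t ≤ 1) : g x ^ t * g y ^ (1 - t) ≤ g (t • x + (1 - t) • y) := by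
  have hmem : t • x + (1 - t) • y ∈ s := hg.1 hx hy ht₀ (sub_nonneg.2 ht₁) (add_sub_cancel t 1)
  have hlog := hg.2 hx hy ht₀ (sub_nonneg.2 ht₁) (add_sub_cancel t 1)
  simp only [smul_eq_mul] at hlog
  calc g x ^ t * g y ^ (1 - t)
      = Real.exp (t * Real.log (g x) + (1 - t) * Real.log (g y)) := by
        rw [Real.exp_add, Real.rpow_def_of_pos (hpos x hx), Real.rpow_def_of_pos (hpos y hy),
          mul_comm t, mul_comm (1 - t)]
    _ ≤ Real.exp (Real.log (g (t • x + (1 - t) • y))) := Real.exp_le_exp.mpr hlog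
    _ = g (t • x + (1 - t) • y) := Real.exp_log (hpos _ hmem)

theorem concaveOn_log_of_mul_deriv2_le_sq {D : Set ℝ} (hD : Convex ℝ D) {g g' g'' : ℝ → ℝ}
    (hg : ContinuousOn g D) (hpos : ∀ x ∈ D, 0 < g x)
    (hg' : ∀ x ∈ interior D, HasDerivAt g (g' x) x)
    (hg'' : ∀ x ∈ interior D, HasDerivAt g' (g'' x) x)
    (hineq : ∀ x ∈ interior D, g x * g'' x ≤ g' x ^ 2) :
    ConcaveOn ℝ D fun x => Real.log (g x) := by
  have hne : ∀ x ∈ interior D, g x ≠ 0 := fun x hx => (hpos x (interior_subset hx)).ne'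
  refine concaveOn_of_hasDerivWithinAt2_nonpos (f' := fun x => g' x / g x)
    (f'' := fun x => (g'' x * g x - g' x * g' x) / g x ^ 2) hD
    (hg.log fun x hx => (hpos x hx).ne') (fun x hx => ?_) (fun x hx => ?_) (fun x hx => ?_)
  · exact ((hg' x hx).log (hne x hx)).hasDerivWithinAt
  · exact ((hg'' x hx).div (hg' x hx) (hne x hx)).hasDerivWithinAt
  · exact div_nonpos_of_nonpos_of_nonneg (by nlinarith [hineq x hx]) (sq_nonneg _)

theorem hasDerivAt_f (x : ℝ) : HasDerivAt f ((3 * x ^ 2 + 6 * x + 2) / 2) x := by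
  have := ((((hasDerivAt_pow 3 x).add ((hasDerivAt_pow 2 x).const_mul 3)).add
    ((hasDerivAt_id x).const_mul 2)).add_const 2).div_const 2
  exact this.congr_deriv (by push_cast; ring)

theorem hasDerivAt_deriv_f (x : ℝ) :
    HasDerivAt (fun x => (3 * x ^ 2 + 6 * x + 2) / 2) (3 * x + 3) x := by
  have := ((((hasDerivAt_pow 2 x).const_mul 3).add ((hasDerivAt_id x).const_mul 6)).add_const
    2).div_const 2
  exact this.congr_deriv (by push_cast; ring)

theorem f_pos {x : ℝ} (hx : 1 ≤ x) : 0 < f x := by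
  unfold f
  positivity

theorem f_mul_deriv2_le_sq {x : ℝ} (hx : 1 ≤ x) :
    f x * (3 * x + 3) ≤ ((3 * x ^ 2 + 6 * x + 2) / 2) ^ 2 := by
  have key : ((3 * x ^ 2 + 6 * x + 2) / 2) ^ 2 - f x * (3 * x + 3)
      = (3 * x ^ 4 + 12 * x ^ 3 + 18 * x ^ 2 - 8) / 4 := by
    unfold f
    ring
  have : 1 ≤ x ^ 2 := one_le_pow₀ hx
  nlinarith [pow_nonneg (by linarith : (0 : ℝ) ≤ x) 3, pow_nonneg (by linarith : (0 : ℝ) ≤ x) 4]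

theorem concaveOn_log_f : ConcaveOn ℝ (Set.Ici 1) fun x => Real.log (f x) := by
  refine concaveOn_log_of_mul_deriv2_le_sq (convex_Ici 1)
    (fun x _ => (hasDerivAt_f x).continuousAt.continuousWithinAt) (fun x hx => f_pos hx)
    (fun x _ => hasDerivAt_f x) (fun x _ => hasDerivAt_deriv_f x) fun x hx => ?_
  rw [interior_Ici] at hx
  exact f_mul_deriv2_le_sq hx.le

/-- `f` is log-concave on `[1, ∞)`: `log ∘ f` is concave there, equivalently
`f(tx + (1-t)y) ≥ f(x)^t · f(y)^(1-t)` for `x, y ≥ 1` and `t ∈ [0,1]`. -/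
theorem f_logConcave :
    ConcaveOn ℝ (Set.Ici (1 : ℝ)) (fun x => Real.log (f x)) ∧
    ∀ x y : ℝ, 1 ≤ x → 1 ≤ y → ∀ t : ℝ, 0 ≤ t → t ≤ 1 →
      f x ^ t * f y ^ (1 - t) ≤ f (t * x + (1 - t) * y) := by
  refine ⟨concaveOn_log_f, fun x y hx hy t ht₀ ht₁ => ?_⟩
  simpa only [smul_eq_mul] using rpow_mul_rpow_le_of_concaveOn_log concaveOn_log_f
    (fun z hz => f_pos hz) hx hy ht₀ ht₁
end

section
/- Let P be a point set with onion layers of sizes n_1, ..., n_k. The number of ordered triples of pairwise vertex-disjoint descending paths in P, where each descending path uses at most one vertex from each onion layer and the three paths are compatible with a fixed cyclic order on each layer, is at most ∏_{i=1}^k f(n_i), where f(x) = (x^3 + 3x^2 + 2x + 2)/2. -/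
open scoped Classical

/-- `(a, b, c)` is consistent with the fixed cyclic order induced by the
linear order on labels: one of the three cyclic rotations of `a < b < c`. -/
def Pos3 (a b c : ℕ) : Prop :=
  (a < b ∧ b < c) ∨ (b < c ∧ c < a) ∨ (c < a ∧ a < b)

/-- Triples of pairwise disjoint vertex sets of descending paths: at most one
vertex per onion layer, all vertices in the layers, compatible with the fixed
cyclic order on each layer. -/
noncomputable def descTriples (k : ℕ) (L : Fin k → Finset ℕ) :
    Finset (Finset ℕ × Finset ℕ × Finset ℕ) :=
  letI U : Finset ℕ := (Finset.univ : Finset (Fin k)).biUnion L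
  Finset.filter
    (fun T =>
      Disjoint T.1 T.2.1 ∧ Disjoint T.1 T.2.2 ∧ Disjoint T.2.1 T.2.2 ∧
      (∀ i, (T.1 ∩ L i).card ≤ 1) ∧
      (∀ i, (T.2.1 ∩ L i).card ≤ 1) ∧
      (∀ i, (T.2.2 ∩ L i).card ≤ 1) ∧
      (∀ i, ∀ a ∈ T.1 ∩ L i, ∀ b ∈ T.2.1 ∩ L i, ∀ c ∈ T.2.2 ∩ L i,
        Pos3 a b c))
    (U.powerset ×ˢ U.powerset ×ˢ U.powerset)


/-!
A triple of paths is determined by its slices `(T.1 ∩ Lᵢ, T.2.1 ∩ Lᵢ, T.2.2 ∩ Lᵢ)`, and each slice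
is a triple of pairwise disjoint sets of size at most one, cyclically ordered when all three are
nonempty; so the count is at most the product of the per-layer counts. On a layer `M` of size `m`,
the slices with an empty component are the empty triple or lie in one of three images of `M × M`,
at most `3m² + 1` of them. The slices with no empty component are the cyclically ordered triples of
points; swapping the last two points sends these injectively to distinct triples that are not
cyclically ordered, so there are at most `m(m-1)(m-2)/2` of them. Hence twice the per-layer count
is at most `m³ + 3m² + 2m + 2 = 2 f(m)`.
-/

open Finset

lemma Finset.eq_of_inter_eq_inter_of_subset_biUnion {ι α : Type*} [DecidableEq α]
    {s : Finset ι} {L : ι → Finset α} {A B : Finset α} (hA : A ⊆ s.biUnion L) (hB : B ⊆ s.biUnion L)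
    (h : ∀ i ∈ s, A ∩ L i = B ∩ L i) : A = B := by
  rw [← inter_eq_left.2 hA, ← inter_eq_left.2 hB, inter_biUnion, inter_biUnion]
  exact biUnion_congr rfl h

section DistinctTriples

variable {α : Type*} [DecidableEq α]

def distinctTriples (M : Finset α) : Finset (α × α × α) :=
  (M ×ˢ M ×ˢ M).filter fun t => t.1 ≠ t.2.1 ∧ t.1 ≠ t.2.2 ∧ t.2.1 ≠ t.2.2

lemma card_distinctTriples_le (M : Finset α) :
    #(distinctTriples M) ≤ #M * ((#M - 1) * (#M - 2)) := by
  have hmaps : ∀ t ∈ distinctTriples M,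
      (⟨t.1, t.2⟩ : Σ _ : α, α × α) ∈ M.sigma fun a => (M.erase a).offDiag := by
    intro t ht
    simp only [distinctTriples, mem_filter, mem_product] at ht
    simp only [mem_sigma, mem_offDiag, mem_erase]
    exact ⟨ht.1.1, ⟨Ne.symm ht.2.1, ht.1.2.1⟩, ⟨Ne.symm ht.2.2.1, ht.1.2.2⟩, ht.2.2.2⟩
  calc #(distinctTriples M)
      ≤ #(M.sigma fun a => (M.erase a).offDiag) :=
        card_le_card_of_injOn _ hmaps fun t _ u _ h => by simpa [Prod.ext_iff] using h
    _ = ∑ a ∈ M, ((#M - 1) * (#M - 1) - (#M - 1)) := by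
        rw [card_sigma]
        refine sum_congr rfl fun a ha => ?_
        rw [offDiag_card, card_erase_of_mem ha]
    _ = #M * ((#M - 1) * (#M - 2)) := by
        rw [sum_const, smul_eq_mul, ← Nat.mul_sub_one, Nat.sub_sub]

end DistinctTriples

lemma Pos3.ne {a b c : ℕ} (h : Pos3 a b c) : a ≠ b ∧ a ≠ c ∧ b ≠ c := by
  unfold Pos3 at h; omega

lemma Pos3.not_swap {a b c : ℕ} (h : Pos3 a b c) : ¬ Pos3 a c b := by
  unfold Pos3 at *; omega

noncomputable def orientedTriples (M : Finset ℕ) : Finset (ℕ × ℕ × ℕ) :=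
  (M ×ˢ M ×ˢ M).filter fun t => Pos3 t.1 t.2.1 t.2.2

lemma two_mul_card_orientedTriples_le (M : Finset ℕ) :
    2 * #(orientedTriples M) ≤ #M * ((#M - 1) * (#M - 2)) := by
  set swap : ℕ × ℕ × ℕ → ℕ × ℕ × ℕ := fun t => (t.1, t.2.2, t.2.1)
  have hswap : swap.Injective := fun t u h => by simpa [swap, Prod.ext_iff, and_comm] using h
  have hdisj : Disjoint (orientedTriples M) ((orientedTriples M).image swap) := by
    simp only [disjoint_left, mem_image, orientedTriples, mem_filter]
    rintro t ⟨-, ht⟩ ⟨u, ⟨-, hu⟩, rfl⟩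
    exact hu.not_swap ht
  have hsub : orientedTriples M ∪ (orientedTriples M).image swap ⊆ distinctTriples M := by
    simp only [union_subset_iff, image_subset_iff]
    constructor
    all_goals
      intro t ht
      simp only [orientedTriples, distinctTriples, mem_filter, mem_product] at ht ⊢
      have := ht.2.ne
      tauto
  calc 2 * #(orientedTriples M)
      = #(orientedTriples M ∪ (orientedTriples M).image swap) := by
        rw [card_union_of_disjoint hdisj, card_image_of_injective _ hswap, two_mul]
    _ ≤ #M * ((#M - 1) * (#M - 2)) := (card_le_card hsub).trans (card_distinctTriples_le M)

noncomputable def layerTriples (M : Finset ℕ) : Finset (Finset ℕ × Finset ℕ × Finset ℕ) :=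
  (M.powerset ×ˢ M.powerset ×ˢ M.powerset).filter fun t =>
    Disjoint t.1 t.2.1 ∧ Disjoint t.1 t.2.2 ∧ Disjoint t.2.1 t.2.2 ∧
    #t.1 ≤ 1 ∧ #t.2.1 ≤ 1 ∧ #t.2.2 ≤ 1 ∧
    ∀ a ∈ t.1, ∀ b ∈ t.2.1, ∀ c ∈ t.2.2, Pos3 a b c

lemma layerTriples_subset (M : Finset ℕ) :
    layerTriples M ⊆ insert (∅, ∅, ∅)
      ((M ×ˢ M).image (fun p => ({p.1}, ({p.2} : Finset ℕ).erase p.1, ∅)) ∪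
        (M ×ˢ M).image (fun p => (∅, {p.1}, ({p.2} : Finset ℕ).erase p.1)) ∪
        (M ×ˢ M).image (fun p => (({p.2} : Finset ℕ).erase p.1, ∅, {p.1})) ∪
        (orientedTriples M).image fun t => ({t.1}, {t.2.1}, {t.2.2})) := by
  rintro ⟨A, B, C⟩ ht
  simp only [layerTriples, mem_filter, mem_product, mem_powerset] at ht
  obtain ⟨⟨hA, hB, hC⟩, dAB, dAC, dBC, cA, cB, cC, hpos⟩ := ht
  obtain ⟨a, hA'⟩ := card_le_one_iff_subset_singleton.1 cA
  obtain ⟨b, hB'⟩ := card_le_one_iff_subset_singleton.1 cB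
  obtain ⟨c, hC'⟩ := card_le_one_iff_subset_singleton.1 cC
  rw [subset_singleton_iff] at hA' hB' hC'
  simp only [mem_insert, mem_union, mem_image, mem_product, Prod.exists, Prod.mk.injEq,
    orientedTriples, mem_filter]
  rcases hA' with rfl | rfl <;> rcases hB' with rfl | rfl <;> rcases hC' with rfl | rfl
  all_goals simp_all [erase_eq_empty_iff]
  -- left: a witness `y ∈ M` with `{y}.erase x = {z}`, namely `z` itself, as `z ≠ x`
  all_goals exact ⟨_, ‹_›, erase_eq_of_notMem (by simpa [eq_comm] using ‹¬_›)⟩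

lemma card_layerTriples_le (M : Finset ℕ) :
    #(layerTriples M) ≤ 3 * #M ^ 2 + #(orientedTriples M) + 1 := by
  have himage (g : ℕ × ℕ → Finset ℕ × Finset ℕ × Finset ℕ) : #((M ×ˢ M).image g) ≤ #M ^ 2 := by
    grw [card_image_le, card_product, sq]
  grw [card_le_card (layerTriples_subset M), card_insert_le, card_union_le, card_union_le,
    card_union_le, himage, himage, himage, card_image_le]
  omega

lemma two_mul_card_layerTriples_le (M : Finset ℕ) :
    2 * #(layerTriples M) ≤ #M ^ 3 + 3 * #M ^ 2 + 2 * #M + 2 := by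
  have hlayer := card_layerTriples_le M
  have horiented := two_mul_card_orientedTriples_le M
  rcases Nat.lt_or_ge #M 2 with hsmall | hlarge
  · interval_cases #M <;> omega
  · obtain ⟨m, hm⟩ := Nat.exists_eq_add_of_le' hlarge
    rw [hm] at hlayer horiented ⊢
    simp only [Nat.add_sub_cancel, Nat.add_succ_sub_one] at horiented
    nlinarith

lemma card_layerTriples_le_f (M : Finset ℕ) : (#(layerTriples M) : ℝ) ≤ f #M := by
  have h : ((2 * #(layerTriples M) : ℕ) : ℝ) ≤ ((#M ^ 3 + 3 * #M ^ 2 + 2 * #M + 2 : ℕ) : ℝ) :=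
    Nat.cast_le.2 (two_mul_card_layerTriples_le M)
  push_cast at h
  rw [f]
  linarith

lemma slice_mem_layerTriples {k : ℕ} {L : Fin k → Finset ℕ}
    {T : Finset ℕ × Finset ℕ × Finset ℕ} (hT : T ∈ descTriples k L) (i : Fin k) :
    (T.1 ∩ L i, T.2.1 ∩ L i, T.2.2 ∩ L i) ∈ layerTriples (L i) := by
  simp only [descTriples, mem_filter] at hT
  obtain ⟨-, d12, d13, d23, c1, c2, c3, hpos⟩ := hT
  simp only [layerTriples, mem_filter, mem_product, mem_powerset]
  exact ⟨⟨inter_subset_right, inter_subset_right, inter_subset_right⟩,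
    d12.mono inter_subset_left inter_subset_left, d13.mono inter_subset_left inter_subset_left,
    d23.mono inter_subset_left inter_subset_left, c1 i, c2 i, c3 i, hpos i⟩

lemma card_descTriples_le_prod (k : ℕ) (L : Fin k → Finset ℕ) :
    #(descTriples k L) ≤ ∏ i, #(layerTriples (L i)) := by
  rw [← Fintype.card_piFinset]
  refine card_le_card_of_injOn (fun T i => (T.1 ∩ L i, T.2.1 ∩ L i, T.2.2 ∩ L i))
    (fun T hT => Fintype.mem_piFinset.2 (slice_mem_layerTriples hT)) ?_
  intro T hT T' hT' h
  simp only [descTriples, mem_coe, mem_filter, mem_product, mem_powerset] at hT hT'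
  have hslice := fun i => congrFun h i
  simp only [Prod.mk.injEq] at hslice
  exact Prod.ext
    (eq_of_inter_eq_inter_of_subset_biUnion hT.1.1 hT'.1.1 fun i _ => (hslice i).1)
    (Prod.ext (eq_of_inter_eq_inter_of_subset_biUnion hT.1.2.1 hT'.1.2.1 fun i _ => (hslice i).2.1)
      (eq_of_inter_eq_inter_of_subset_biUnion hT.1.2.2 hT'.1.2.2 fun i _ => (hslice i).2.2))

theorem card_disjoint_triples_le_general (k : ℕ) (L : Fin k → Finset ℕ) :
    ((descTriples k L).card : ℝ) ≤ ∏ i, f (((L i).card : ℝ)) :=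
  calc ((descTriples k L).card : ℝ)
      ≤ ∏ i, (#(layerTriples (L i)) : ℝ) := mod_cast card_descTriples_le_prod k L
    _ ≤ ∏ i, f (((L i).card : ℝ)) :=
        prod_le_prod (fun _ _ => Nat.cast_nonneg _) fun i _ => card_layerTriples_le_f (L i)

/-- The number of ordered triples of pairwise vertex-disjoint descending paths
(each identified with its vertex set, using at most one vertex per layer and
compatible with the fixed cyclic order on each layer) is at most `∏ᵢ f(nᵢ)`,
where `nᵢ` are the onion-layer sizes. -/
theorem card_disjoint_triples_le (k : ℕ) (L : Fin k → Finset ℕ)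
    (hdisj : ∀ i j, i ≠ j → Disjoint (L i) (L j)) :
    ((descTriples k L).card : ℝ) ≤ ∏ i, f (((L i).card : ℝ)) :=
  card_disjoint_triples_le_general k L
end

section
/- In any zig-zag family as in the pipe gadget: for a pipe with n states, any two distinct zig-zags L_i and L_j (0 ≤ i < j ≤ n-1) contain a pair of crossing edges; consequently, any crossing-free graph on the pipe's points containing all frame edges contains at most one complete zig-zag. -/
/-- The bottom points `p_t = (t, 0)` of a pipe. -/
noncomputable def pp (t : ℕ) : ℝ × ℝ := ((t : ℝ), 0)

/-- The top points `q_t = (t, 1)` of a pipe. -/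
noncomputable def qq (t : ℕ) : ℝ × ℝ := ((t : ℝ), 1)

/-- The point set of a pipe of length `l`. -/
noncomputable def pipePts (l : ℕ) : Finset (ℝ × ℝ) :=
  (Finset.Icc 1 l).image pp ∪ (Finset.Icc 1 l).image qq

/-- The zig-zag `L_i` of a pipe of length `l`: for `i ≥ 1` the edges
`a_{i,t} = {p_t, q_{t+4i}}` and `b_{i,t} = {q_{t+4i}, p_{t+1}}` for
`1 ≤ t ≤ l - 4i`; for `i = 0` the edges `a_{0,t} = {p_t, q_{t+1}}` and
`b_{0,t} = {q_t, p_t}` for `1 ≤ t ≤ l - 1`. -/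
noncomputable def zigzag (l i : ℕ) : Set (Finset (ℝ × ℝ)) :=
  if i = 0 then
    {e | ∃ t, 1 ≤ t ∧ t ≤ l - 1 ∧
      (e = ({pp t, qq (t + 1)} : Finset (ℝ × ℝ)) ∨
       e = ({qq t, pp t} : Finset (ℝ × ℝ)))}
  else
    {e | ∃ t, 1 ≤ t ∧ t ≤ l - 4 * i ∧
      (e = ({pp t, qq (t + 4 * i)} : Finset (ℝ × ℝ)) ∨
       e = ({qq (t + 4 * i), pp (t + 1)} : Finset (ℝ × ℝ)))}

/-- The horizontal frame edges of a pipe of length `l`. -/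
noncomputable def frameEdges (l : ℕ) : Set (Finset (ℝ × ℝ)) :=
  {e | ∃ t, 1 ≤ t ∧ t < l ∧
    (e = ({pp t, pp (t + 1)} : Finset (ℝ × ℝ)) ∨
     e = ({qq t, qq (t + 1)} : Finset (ℝ × ℝ)))}

/-- Two edges (unordered pairs of points) cross if their relative interiors
(open segments) intersect. -/
def CrossE (e f : Finset (ℝ × ℝ)) : Prop :=
  ∃ a b c d : ℝ × ℝ, e = ({a, b} : Finset (ℝ × ℝ)) ∧ f = ({c, d} : Finset (ℝ × ℝ)) ∧
    (openSegment ℝ a b ∩ openSegment ℝ c d).Nonempty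


/-!
For `j ≥ 1` the zig-zag `L_j` contains the long edge `p_1 q_{4j+1}`, while every `L_i` contains
an edge `p_2 q_b` with `b < 4(i+1)`. When `i < j` the endpoints of these two edges occur in
opposite orders on the bottom and on the top line of the pipe, so the segments cross.
-/

lemma openSegment_inter_nonempty_of_lt_of_lt {a b c d : ℝ} (hac : a < c) (hdb : d < b) :
    (openSegment ℝ ((a, 0) : ℝ × ℝ) (b, 1) ∩ openSegment ℝ ((c, 0) : ℝ × ℝ) (d, 1)).Nonempty := by
  -- both segments are at the same abscissa at height `s`
  set s := (c - a) / (c - a + (b - d)) with hs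
  have hden : 0 < c - a + (b - d) := by linarith
  have hs0 : 0 < s := div_pos (by linarith) hden
  have hs1 : s < 1 := (div_lt_one hden).2 (by linarith)
  refine ⟨(1 - s) • ((a, 0) : ℝ × ℝ) + s • (b, 1), ⟨1 - s, s, by linarith, hs0, by ring, rfl⟩,
    1 - s, s, by linarith, hs0, by ring, ?_⟩
  simp only [Prod.smul_mk, Prod.mk_add_mk, smul_eq_mul, mul_zero, zero_add, mul_one,
    Prod.mk.injEq, and_true]
  rw [hs]
  field_simp
  ring

lemma crossE_pp_qq {a b c d : ℕ} (hac : a < c) (hdb : d < b) :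
    CrossE {pp a, qq b} {pp c, qq d} :=
  ⟨pp a, qq b, pp c, qq d, rfl, rfl,
    openSegment_inter_nonempty_of_lt_of_lt (by exact_mod_cast hac) (by exact_mod_cast hdb)⟩

lemma CrossE.symm {e f : Finset (ℝ × ℝ)} (h : CrossE e f) : CrossE f e := by
  obtain ⟨a, b, c, d, he, hf, x, hx, hx'⟩ := h
  exact ⟨c, d, a, b, hf, he, x, hx', hx⟩

lemma pp_injective : Function.Injective pp := fun s t h => by
  simpa [pp] using congrArg Prod.fst h

lemma pp_ne_qq (s t : ℕ) : pp s ≠ qq t := by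
  simp [pp, qq]

lemma pair_pp_qq_ne {a b c d : ℕ} (hac : a ≠ c) :
    ({pp a, qq b} : Finset (ℝ × ℝ)) ≠ {pp c, qq d} := by
  intro h
  have : pp a ∈ ({pp c, qq d} : Finset (ℝ × ℝ)) := h ▸ Finset.mem_insert_self _ _
  simp only [Finset.mem_insert, Finset.mem_singleton, pp_injective.eq_iff] at this
  exact this.elim hac (pp_ne_qq a d)

lemma pair_pp_one_mem_zigzag {l j : ℕ} (hj : j ≠ 0) (hjl : 4 * j < l) :
    {pp 1, qq (4 * j + 1)} ∈ zigzag l j := by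
  simp only [zigzag, if_neg hj, Set.mem_ofPred_eq]
  exact ⟨1, le_rfl, by omega, Or.inl (by rw [add_comm])⟩

lemma exists_pair_pp_two_mem_zigzag {l i : ℕ} (hl : 3 ≤ l) (hil : 4 * i < l) :
    ∃ b < 4 * (i + 1), {pp 2, qq b} ∈ zigzag l i := by
  by_cases hi : i = 0
  · subst hi
    refine ⟨3, by norm_num, ?_⟩
    simp only [zigzag]
    exact ⟨2, by norm_num, by omega, Or.inl rfl⟩
  · refine ⟨4 * i + 1, by omega, ?_⟩
    simp only [zigzag, if_neg hi, Set.mem_ofPred_eq]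
    exact ⟨1, le_rfl, by omega, Or.inr (by rw [Finset.pair_comm, add_comm])⟩

lemma exists_crossE_zigzag_of_lt {l i j : ℕ} (hij : i < j) (hjl : 4 * j < l) :
    ∃ e ∈ zigzag l i, ∃ f ∈ zigzag l j, e ≠ f ∧ CrossE e f := by
  obtain ⟨b, hb, he⟩ := exists_pair_pp_two_mem_zigzag (l := l) (i := i) (by omega) (by omega)
  exact ⟨_, he, _, pair_pp_one_mem_zigzag (by omega) hjl, pair_pp_qq_ne (by norm_num),
    (crossE_pp_qq (by norm_num) (by omega)).symm⟩

lemma exists_crossE_zigzag_of_ne {l i j : ℕ} (hij : i ≠ j) (hil : 4 * i < l) (hjl : 4 * j < l) :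
    ∃ e ∈ zigzag l i, ∃ f ∈ zigzag l j, e ≠ f ∧ CrossE e f := by
  rcases hij.lt_or_gt with h | h
  · exact exists_crossE_zigzag_of_lt h hjl
  · obtain ⟨e, he, f, hf, hne, hc⟩ := exists_crossE_zigzag_of_lt h hil
    exact ⟨f, hf, e, he, hne.symm, hc.symm⟩

theorem zigzags_cross_general (n l : ℕ) (hl : 4 * (n - 1) < l) :
    (∀ i j : ℕ, i < n → j < n → i ≠ j →
      ∃ e ∈ zigzag l i, ∃ f ∈ zigzag l j, CrossE e f) ∧
    (∀ E : Set (Finset (ℝ × ℝ)),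
      (∀ e ∈ E, ∃ a ∈ pipePts l, ∃ b ∈ pipePts l, a ≠ b ∧
        e = ({a, b} : Finset (ℝ × ℝ))) →
      (∀ e ∈ E, ∀ f ∈ E, e ≠ f → ¬ CrossE e f) →
      frameEdges l ⊆ E →
      ∀ i j : ℕ, i < n → j < n → zigzag l i ⊆ E → zigzag l j ⊆ E → i = j) := by
  refine ⟨fun i j hi hj hij => ?_, fun E _ hE _ i j hi hj hiE hjE => ?_⟩
  · obtain ⟨e, he, f, hf, -, hc⟩ := exists_crossE_zigzag_of_ne (l := l) hij (by omega) (by omega)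
    exact ⟨e, he, f, hf, hc⟩
  · by_contra hij
    obtain ⟨e, he, f, hf, hne, hc⟩ := exists_crossE_zigzag_of_ne (l := l) hij (by omega) (by omega)
    exact hE e (hiE he) f (hjE hf) hne hc

/-- In a pipe with `n` states and length `l > 4(n-1)`: any two distinct
zig-zags `L_i`, `L_j` contain a pair of crossing edges; consequently any
crossing-free graph on the pipe's points containing all frame edges contains
at most one complete zig-zag. -/
theorem zigzags_cross (n l : ℕ) (hn : 1 ≤ n) (hl : 4 * (n - 1) < l) :
    (∀ i j : ℕ, i < n → j < n → i ≠ j →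
      ∃ e ∈ zigzag l i, ∃ f ∈ zigzag l j, CrossE e f) ∧
    (∀ E : Set (Finset (ℝ × ℝ)),
      (∀ e ∈ E, ∃ a ∈ pipePts l, ∃ b ∈ pipePts l, a ≠ b ∧
        e = ({a, b} : Finset (ℝ × ℝ))) →
      (∀ e ∈ E, ∀ f ∈ E, e ≠ f → ¬ CrossE e f) →
      frameEdges l ⊆ E →
      ∀ i j : ℕ, i < n → j < n → zigzag l i ⊆ E → zigzag l j ⊆ E → i = j) :=
  zigzags_cross_general n l hl
end
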